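/- Let n = 4 and let f_i = x_i^{c_i} − Π_{j≠i} x_j^{u_{ij}}, i = 1,…,4, be critical binomials of I_A. If f_i ≠ −f_j for every i ≠ j, then the critical ideal satisfies C_A = ⟨f_1, f_2, f_3, f_4⟩. -/

import Mathlib

/-!
Call `x^v` and `x^w` linked when one is obtained from the other by repeatedly replacing a factor
`x_j^{c_j}` by `x^{u_j}`; linked monomials differ by an element of `⟨f_1, …, f_4⟩`. So it suffices
to link every monomial of degree `D = c_i a_i` to `x_i^{c_i}`.

By minimality of `c_l`, a monomial of degree `D` divisible by a variable `x_l` with `c_l a_l = D`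
is the pure power `x_l^{c_l}`; call the other monomials of degree `D` free. Two free monomials are
linked by descent on the degree of their gcd: after cancelling it, the two sides live on disjoint
sets of at most three variables, so one of them is a power `x_j^g` with `g ≥ c_j`, and one or two
moves strictly enlarge the gcd.

Each pure power `x_l^{c_l}` is linked to `x^{u_l}`, which is free or another pure power. Since
`f_i ≠ -f_j`, these links have no 2-cycles, so two consecutive pure links produce three pure
powers of degree `D`. Then no free monomial of degree `D` exists, and with only four variables the
pure links alone connect all pure powers; otherwise every pure power reaches a free monomial
within two links.
-/

open MvPolynomial Finsupp

variable (K : Type*) [Field K]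

/-- The `A`-degree of an exponent vector `u ∈ ℕ^n` with respect to `a_1, …, a_n ∈ ℕ`, namely
`∑ i, u i * a i`. -/
def degN {n : ℕ} (a : Fin n → ℕ) (u : Fin n →₀ ℕ) : ℕ :=
  ∑ i, u i * a i

/-- The defining ideal `I_A` of the monomial curve `x_i = t^{a_i}`: the ideal generated by all
binomials `x^u - x^v` with `∑ u_i a_i = ∑ v_i a_i` (equivalently, the kernel of
`k[x_1,…,x_n] → k[t]`, `x_i ↦ t^{a_i}`). -/
noncomputable def curveIdeal {n : ℕ} (a : Fin n → ℕ) : Ideal (MvPolynomial (Fin n) K) :=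
  Ideal.span { f | ∃ u v : Fin n →₀ ℕ, degN a u = degN a v ∧
    f = monomial u (1 : K) - monomial v (1 : K) }

/-- `c` is the critical exponent of the variable `x_i`: the least positive integer `c` with
`c * a_i ∈ ∑_{j ≠ i} ℕ a_j`. -/
def IsCritExp {n : ℕ} (a : Fin n → ℕ) (i : Fin n) (c : ℕ) : Prop :=
  IsLeast { m : ℕ | 0 < m ∧ ∃ u : Fin n →₀ ℕ, u i = 0 ∧ m * a i = degN a u } c

/-- `f` is a critical binomial of `I_A` with respect to `x_i` (where `c` is the vector of
critical exponents): `f = x_i^{c_i} - ∏_{j ≠ i} x_j^{u_{ij}} ∈ I_A`. -/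
def IsCritBinom {n : ℕ} (a c : Fin n → ℕ) (i : Fin n) (f : MvPolynomial (Fin n) K) : Prop :=
  ∃ u : Fin n →₀ ℕ, u i = 0 ∧
    f = monomial (Finsupp.single i (c i)) (1 : K) - monomial u (1 : K) ∧
    f ∈ curveIdeal K a

/-- The critical ideal `C_A`: the ideal generated by all critical binomials of `I_A`. -/
noncomputable def criticalIdeal {n : ℕ} (a c : Fin n → ℕ) :
    Ideal (MvPolynomial (Fin n) K) :=
  Ideal.span { f | ∃ i : Fin n, IsCritBinom K a c i f }

/-- `S` is a set of binomials generating `J`. -/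
def IsBinomGenSet {σ : Type*} (J : Ideal (MvPolynomial σ K)) (S : Set (MvPolynomial σ K)) :
    Prop :=
  (∀ f ∈ S, ∃ u v : σ →₀ ℕ, f = monomial u (1 : K) - monomial v (1 : K)) ∧
  Ideal.span S = J

/-- The monomial `x^u` is an indispensable monomial of `J`: every set of binomials generating `J`
contains a binomial one of whose monomials is `x^u`. -/
def IndispMonomial {σ : Type*} (J : Ideal (MvPolynomial σ K)) (u : σ →₀ ℕ) : Prop :=
  ∀ S : Set (MvPolynomial σ K), IsBinomGenSet K J S → ∃ f ∈ S, u ∈ f.support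

/-- `f` is an indispensable binomial of `J`: every set of binomials generating `J` contains
`f` or `-f`. -/
def IndispBinomial {σ : Type*} (J : Ideal (MvPolynomial σ K)) (f : MvPolynomial σ K) : Prop :=
  ∀ S : Set (MvPolynomial σ K), IsBinomGenSet K J S → f ∈ S ∨ -f ∈ S

/-- `x^u - x^v` is a primitive binomial of `I_A`: it is a nonzero binomial of `I_A` and there is
no other nonzero binomial `x^{u'} - x^{v'} ∈ I_A` with `x^{u'} ∣ x^u` and `x^{v'} ∣ x^v`. -/
def IsPrimitive {n : ℕ} (a : Fin n → ℕ) (u v : Fin n →₀ ℕ) : Prop :=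
  u ≠ v ∧ (monomial u (1 : K) - monomial v (1 : K)) ∈ curveIdeal K a ∧
  ∀ u' v' : Fin n →₀ ℕ, u' ≤ u → v' ≤ v → u' ≠ v' →
    (monomial u' (1 : K) - monomial v' (1 : K)) ∈ curveIdeal K a → u' = u ∧ v' = v

section Degree

variable {n : ℕ} {a : Fin n → ℕ}

lemma degN_add (v w : Fin n →₀ ℕ) : degN a (v + w) = degN a v + degN a w := by
  simp [degN, add_mul, Finset.sum_add_distrib]

lemma degN_single (j : Fin n) (m : ℕ) : degN a (single j m) = m * a j := by
  simp [degN, single_apply]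

lemma degN_zero : degN a 0 = 0 := by
  simp [degN]

lemma degN_mono {v w : Fin n →₀ ℕ} (h : v ≤ w) : degN a v ≤ degN a w :=
  Finset.sum_le_sum fun i _ => Nat.mul_le_mul_right _ (h i)

lemma eq_of_le_of_degN_eq (ha : ∀ i, 0 < a i) {v w : Fin n →₀ ℕ} (hle : v ≤ w)
    (hdeg : degN a v = degN a w) : v = w := by
  have hsplit : degN a (w - v) + degN a v = degN a w := by
    rw [← degN_add, tsub_add_cancel_of_le hle]
  refine le_antisymm hle fun k => ?_
  by_contra hk
  have hpos : 0 < (w - v) k * a k := Nat.mul_pos (by rw [tsub_apply]; omega) (ha k)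
  have hle_sum := Finset.single_le_sum (f := fun i => (w - v) i * a i) (fun _ _ => Nat.zero_le _)
    (Finset.mem_univ k)
  simp only [degN] at hsplit hdeg
  omega

lemma inf_add_tsub (v w : Fin n →₀ ℕ) : v ⊓ w + (v - w) = v := by
  ext k
  simp only [Finsupp.add_apply, inf_apply, tsub_apply]
  omega

lemma degN_tsub_comm {v w : Fin n →₀ ℕ} (h : degN a v = degN a w) :
    degN a (v - w) = degN a (w - v) := by
  have hv := congrArg (degN a) (inf_add_tsub v w)
  have hw := congrArg (degN a) (inf_add_tsub w v)
  rw [degN_add] at hv hw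
  rw [inf_comm] at hw
  omega

lemma IsCritExp.pos {i : Fin n} {c : ℕ} (hc : IsCritExp a i c) : 0 < c :=
  hc.1.1

lemma IsCritExp.le {i : Fin n} {c m : ℕ} (hc : IsCritExp a i c) {x : Fin n →₀ ℕ} (hm : 0 < m)
    (hx : x i = 0) (hdeg : m * a i = degN a x) : c ≤ m :=
  hc.2 ⟨hm, x, hx, hdeg⟩

lemma eq_single_of_degN_eq (ha : ∀ i, 0 < a i) {l : Fin n} {c : ℕ} (hc : IsCritExp a l c)
    {v : Fin n →₀ ℕ} (hv : degN a v = c * a l) (hvl : v l ≠ 0) : v = single l c := by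
  have hsplit : v l * a l + degN a (v.erase l) = c * a l := by
    rw [← degN_single, ← degN_add, single_add_erase, hv]
  rcases lt_or_ge (v l) c with hlt | hge
  · have := hc.le (m := c - v l) (by omega) (erase_same (f := v)) (by rw [Nat.sub_mul]; omega)
    omega
  · have hvc : v l = c := by
      have := Nat.mul_le_mul_right (a l) hge
      have : v l * a l ≤ c * a l := by omega
      exact le_antisymm (Nat.le_of_mul_le_mul_right this (ha l)) hge
    have hle : single l (v l) ≤ v := single_le_iff.mpr le_rfl
    rw [← hvc]
    exact (eq_of_le_of_degN_eq ha hle (by rw [degN_single, hv, hvc])).symm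

end Degree

section Moves

variable {n : ℕ} {a c : Fin n → ℕ} {u : Fin n → Fin n →₀ ℕ}

def CritMove (c : Fin n → ℕ) (u : Fin n → Fin n →₀ ℕ) (x y : Fin n →₀ ℕ) : Prop :=
  ∃ j t, x = t + single j (c j) ∧ y = t + u j

def Linked (c : Fin n → ℕ) (u : Fin n → Fin n →₀ ℕ) : (Fin n →₀ ℕ) → (Fin n →₀ ℕ) → Prop :=
  Relation.EqvGen (CritMove c u)

lemma Linked.refl (v : Fin n →₀ ℕ) : Linked c u v v :=
  Relation.EqvGen.refl v

lemma Linked.symm {v w : Fin n →₀ ℕ} (h : Linked c u v w) : Linked c u w v :=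
  Relation.EqvGen.symm v w h

lemma Linked.trans {v w x : Fin n →₀ ℕ} (h₁ : Linked c u v w) (h₂ : Linked c u w x) :
    Linked c u v x :=
  Relation.EqvGen.trans v w x h₁ h₂

noncomputable def moveAt (c : Fin n → ℕ) (u : Fin n → Fin n →₀ ℕ) (v : Fin n →₀ ℕ) (j : Fin n) :
    Fin n →₀ ℕ :=
  v - single j (c j) + u j

lemma linked_moveAt {v : Fin n →₀ ℕ} {j : Fin n} (hj : c j ≤ v j) :
    Linked c u v (moveAt c u v j) :=
  Relation.EqvGen.rel _ _
    ⟨j, v - single j (c j), (tsub_add_cancel_of_le (single_le_iff.mpr hj)).symm, rfl⟩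

lemma linked_single_u (j : Fin n) : Linked c u (single j (c j)) (u j) :=
  Relation.EqvGen.rel _ _ ⟨j, 0, (zero_add _).symm, (zero_add _).symm⟩

lemma degN_moveAt {j : Fin n} (hu : degN a (u j) = c j * a j) {v : Fin n →₀ ℕ} (hj : c j ≤ v j) :
    degN a (moveAt c u v j) = degN a v := by
  have hsplit := congrArg (degN a) (tsub_add_cancel_of_le (single_le_iff.mpr hj))
  rw [degN_add, degN_single] at hsplit
  rw [moveAt, degN_add, hu, ← hsplit]

lemma le_moveAt (v : Fin n →₀ ℕ) (j : Fin n) : u j ≤ moveAt c u v j :=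
  le_add_self

lemma tsub_le_moveAt (v : Fin n →₀ ℕ) (j : Fin n) : v - single j (c j) ≤ moveAt c u v j :=
  le_self_add

lemma add_le_moveAt {r v : Fin n →₀ ℕ} {j : Fin n} (h : r + single j (c j) ≤ v) :
    r + u j ≤ moveAt c u v j :=
  add_le_add (le_tsub_of_add_le_right h) le_rfl

end Moves

section Ideals

variable {n : ℕ} {a c : Fin n → ℕ} {u : Fin n → Fin n →₀ ℕ}

lemma aeval_X_pow_monomial (a : Fin n → ℕ) (x : Fin n →₀ ℕ) :
    aeval (fun l => (Polynomial.X : Polynomial K) ^ a l) (monomial x (1 : K)) =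
      Polynomial.X ^ degN a x := by
  rw [aeval_monomial, map_one, one_mul, Finsupp.prod_pow, degN, ← Finset.prod_pow_eq_pow_sum]
  exact Finset.prod_congr rfl fun l _ => by rw [← pow_mul, Nat.mul_comm]

/-- `I_A` lies in the kernel of `x_l ↦ T^{a_l}`, which sends `x^v` to `T^{degN a v}`. -/
lemma degN_eq_of_mem_curveIdeal {x y : Fin n →₀ ℕ}
    (h : monomial x (1 : K) - monomial y (1 : K) ∈ curveIdeal K a) : degN a x = degN a y := by
  set φ := aeval (R := K) fun l => (Polynomial.X : Polynomial K) ^ a l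
  have hker : curveIdeal K a ≤ RingHom.ker φ := by
    refine Ideal.span_le.mpr ?_
    rintro _ ⟨p, q, hpq, rfl⟩
    rw [SetLike.mem_coe, RingHom.mem_ker, map_sub, aeval_X_pow_monomial, aeval_X_pow_monomial,
      hpq, sub_self]
  have hφ := hker h
  rw [RingHom.mem_ker, map_sub, aeval_X_pow_monomial, aeval_X_pow_monomial, sub_eq_zero] at hφ
  simpa using congrArg Polynomial.natDegree hφ

lemma sub_mem_span_of_linked {f : Fin n → MvPolynomial (Fin n) K}
    (hf : ∀ i, f i = monomial (single i (c i)) (1 : K) - monomial (u i) (1 : K))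
    {x y : Fin n →₀ ℕ} (h : Linked c u x y) :
    monomial x (1 : K) - monomial y (1 : K) ∈ Ideal.span (Set.range f) := by
  induction h with
  | rel x y hxy =>
    obtain ⟨j, t, rfl, rfl⟩ := hxy
    have hmul : monomial (t + single j (c j)) (1 : K) - monomial (t + u j) (1 : K) =
        monomial t (1 : K) * f j := by
      rw [hf j, mul_sub, monomial_mul, monomial_mul, one_mul]
    rw [hmul]
    exact Ideal.mul_mem_left _ _ (Ideal.subset_span ⟨j, rfl⟩)
  | refl x => simp
  | symm x y _ ih => simpa using neg_mem ih
  | trans x y z _ _ ih₁ ih₂ => simpa using add_mem ih₁ ih₂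

end Ideals

section Descent

variable {n : ℕ} {a c : Fin n → ℕ} {u : Fin n → Fin n →₀ ℕ}

/-- `x_i^{c_i} - x^{u_i}` is a critical binomial of `I_A` for every `i`. -/
structure CriticalBinomials (a c : Fin n → ℕ) (u : Fin n → Fin n →₀ ℕ) : Prop where
  pos : ∀ i, 0 < a i
  crit : ∀ i, IsCritExp a i (c i)
  apply_self : ∀ i, u i i = 0
  degN_eq : ∀ i, degN a (u i) = c i * a i

lemma CriticalBinomials.ne_zero (h : CriticalBinomials a c u) (j : Fin n) : u j ≠ 0 := by
  intro h0
  have := h.degN_eq j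
  rw [h0, degN_zero] at this
  exact (Nat.mul_pos (h.crit j).pos (h.pos j)).ne this

def IsFree (a c : Fin n → ℕ) (D : ℕ) (v : Fin n →₀ ℕ) : Prop :=
  degN a v = D ∧ ∀ l, c l * a l = D → v l = 0

lemma IsFree.apply_eq_zero_of_le {D : ℕ} {v x : Fin n →₀ ℕ} (hv : IsFree a c D v) (hx : x ≤ v)
    {l : Fin n} (hl : c l * a l = D) : x l = 0 :=
  Nat.eq_zero_of_le_zero ((hx l).trans (hv.2 l hl).le)

lemma IsFree.ne_of_apply_ne_zero {D : ℕ} {v : Fin n →₀ ℕ} (hv : IsFree a c D v) {i j : Fin n}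
    (hi : c i * a i = D) (hj : v j ≠ 0) : i ≠ j := by
  rintro rfl
  exact hj (hv.2 i hi)

lemma IsFree.moveAt (h : CriticalBinomials a c u) {D : ℕ} {v : Fin n →₀ ℕ} (hv : IsFree a c D v)
    {j : Fin n} (hj : c j ≤ v j) : IsFree a c D (_root_.moveAt c u v j) := by
  have hdeg : degN a (_root_.moveAt c u v j) = D := (degN_moveAt (h.degN_eq j) hj).trans hv.1
  refine ⟨hdeg, fun l hl => ?_⟩
  by_contra hne
  have hsingle := eq_single_of_degN_eq h.pos (h.crit l) (hdeg.trans hl.symm) hne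
  have hzero : v - single j (c j) = 0 := by
    ext k
    by_cases hkl : k = l
    · subst hkl
      exact hv.apply_eq_zero_of_le tsub_le_self hl
    · have hk := tsub_le_moveAt (c := c) (u := u) v j k
      rw [hsingle, single_eq_of_ne hkl] at hk
      exact Nat.eq_zero_of_le_zero hk
  have hvj : v = single j (c j) :=
    le_antisymm (tsub_eq_zero_iff_le.mp hzero) (single_le_iff.mpr hj)
  have := hv.2 j (by rw [← hv.1, hvj, degN_single])
  have := (h.crit j).pos
  omega

lemma card_support_add_card_support_add_card_le {x y : Fin n →₀ ℕ} {A : Finset (Fin n)}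
    (hxy : ∀ k, x k = 0 ∨ y k = 0) (hx : ∀ k ∈ A, x k = 0) (hy : ∀ k ∈ A, y k = 0) :
    x.support.card + y.support.card + A.card ≤ n := by
  classical
  have hdisj : Disjoint x.support y.support := Finset.disjoint_left.mpr fun k hkx hky => by
    rw [Finsupp.mem_support_iff] at hkx hky
    rcases hxy k with h | h <;> contradiction
  have hdisjA : Disjoint (x.support ∪ y.support) A := Finset.disjoint_left.mpr fun k hk hkA => by
    rcases Finset.mem_union.mp hk with h | h <;> rw [Finsupp.mem_support_iff] at h
    exacts [h (hx k hkA), h (hy k hkA)]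
  rw [← Finset.card_union_of_disjoint hdisj, ← Finset.card_union_of_disjoint hdisjA]
  exact (Finset.card_le_univ _).trans_eq (Fintype.card_fin n)

lemma one_le_card_support {x : Fin n →₀ ℕ} (hx : x ≠ 0) : 1 ≤ x.support.card :=
  Finset.card_pos.mpr (support_nonempty_iff.mpr hx)

lemma add_single_one_le (r : Fin n →₀ ℕ) {x : Fin n →₀ ℕ} {k : Fin n} (hx : x k ≠ 0) :
    r + single k 1 ≤ r + x :=
  add_le_add_right (single_le_iff.mpr (Nat.one_le_iff_ne_zero.mpr hx)) r

lemma lt_degN_inf (ha : ∀ i, 0 < a i) {r v w : Fin n →₀ ℕ} {k : Fin n} (hv : r + single k 1 ≤ v)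
    (hw : r + single k 1 ≤ w) : degN a r < degN a (v ⊓ w) := by
  have := degN_mono (a := a) (le_inf hv hw)
  rw [degN_add, degN_single] at this
  have := ha k
  omega

lemma exists_tsub_eq_single (hc : ∀ i, IsCritExp a i (c i)) {v w : Fin n →₀ ℕ}
    (hdeg : degN a v = degN a w) (hcard : (v - w).support.card = 1) :
    ∃ j g, c j ≤ g ∧ v - w = single j g := by
  obtain ⟨j, g, hg, hs⟩ := card_support_eq_one'.mp hcard
  have hj := DFunLike.congr_fun hs j
  rw [single_eq_same, tsub_apply] at hj
  refine ⟨j, g, (hc j).le (Nat.pos_of_ne_zero hg) (x := w - v) ?_ ?_, hs⟩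
  · rw [tsub_apply]
    omega
  · rw [← degN_tsub_comm hdeg, hs, degN_single]

lemma eq_single_or_isFree (h : CriticalBinomials a c u) {D : ℕ} {x : Fin n →₀ ℕ}
    (hx : degN a x = D) : (∃ l, c l * a l = D ∧ x = single l (c l)) ∨ IsFree a c D x := by
  by_cases hT : ∃ l, c l * a l = D ∧ x l ≠ 0
  · obtain ⟨l, hl, hxl⟩ := hT
    exact .inl ⟨l, hl, eq_single_of_degN_eq h.pos (h.crit l) (hx.trans hl.symm) hxl⟩
  · push Not at hT
    exact .inr ⟨hx, hT⟩

lemma u_eq_single_or_isFree (h : CriticalBinomials a c u) (l : Fin n) :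
    (∃ l', l' ≠ l ∧ c l' * a l' = c l * a l ∧ u l = single l' (c l')) ∨
      IsFree a c (c l * a l) (u l) := by
  rcases eq_single_or_isFree h (h.degN_eq l) with ⟨l', hl', hul⟩ | hfree
  · refine .inl ⟨l', ?_, hl', hul⟩
    rintro rfl
    have := h.apply_self l'
    rw [hul, single_eq_same] at this
    exact (h.crit l').pos.ne' this
  · exact .inr hfree

lemma linked_single_of_u_eq {l l' : Fin n} (hu : u l = single l' (c l')) :
    Linked c u (single l (c l)) (single l' (c l')) :=
  hu ▸ linked_single_u l

end Descent

section FourVariables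

variable {a c : Fin 4 → ℕ} {u : Fin 4 → Fin 4 →₀ ℕ}

/-- After cancelling the gcd, the two sides have disjoint supports inside three variables, so one
of them involves a single variable. -/
lemma exists_single_of_degN_eq (ha : ∀ i, 0 < a i) (hc : ∀ i, IsCritExp a i (c i)) {i : Fin 4}
    {v w : Fin 4 →₀ ℕ} (hvi : v i = 0) (hwi : w i = 0) (hdeg : degN a v = degN a w)
    (hne : v ≠ w) : ∃ j g, c j ≤ g ∧ (v - w = single j g ∨ w - v = single j g) := by
  have hpos : ∀ {x y : Fin 4 →₀ ℕ}, degN a x = degN a y → x ≠ y → 1 ≤ (x - y).support.card :=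
    fun hd hxy => one_le_card_support fun h0 =>
      hxy (eq_of_le_of_degN_eq ha (tsub_eq_zero_iff_le.mp h0) hd)
  have hcard := card_support_add_card_support_add_card_le (x := v - w) (y := w - v) (A := {i})
    (fun k => by simp only [tsub_apply]; omega) (by simp [hvi, hwi]) (by simp [hvi, hwi])
  have h₁ := hpos hdeg hne
  have h₂ := hpos hdeg.symm hne.symm
  rw [Finset.card_singleton] at hcard
  rcases (by omega : (v - w).support.card = 1 ∨ (w - v).support.card = 1) with h | h
  · obtain ⟨j, g, hg, hs⟩ := exists_tsub_eq_single hc hdeg h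
    exact ⟨j, g, hg, .inl hs⟩
  · obtain ⟨j, g, hg, hs⟩ := exists_tsub_eq_single hc hdeg.symm h
    exact ⟨j, g, hg, .inr hs⟩

lemma exists_closer_of_single (h : CriticalBinomials a c u) {i j k : Fin 4} {D g m : ℕ}
    {r : Fin 4 →₀ ℕ} (hi : c i * a i = D) (hv : IsFree a c D (r + single j g))
    (hw : IsFree a c D (r + single k m)) (hg : c j ≤ g) (hm : c k ≤ m) (hjk : j ≠ k)
    (hujk : u j k = 0) :
    ∃ v' w', Linked c u (r + single j g) v' ∧ Linked c u (r + single k m) w' ∧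
      IsFree a c D v' ∧ IsFree a c D w' ∧ degN a r < degN a (v' ⊓ w') := by
  have hvj : c j ≤ (r + single j g) j := by simp only [Finsupp.add_apply, single_eq_same]; omega
  have hwk : c k ≤ (r + single k m) k := by simp only [Finsupp.add_apply, single_eq_same]; omega
  have hv' := hv.moveAt h hvj
  have hw' := hw.moveAt h hwk
  have hrv' : r + u j ≤ moveAt c u (r + single j g) j :=
    add_le_moveAt (add_le_add_right (single_le_iff.mpr (by simpa using hg)) r)
  have hrw' : r + u k ≤ moveAt c u (r + single k m) k :=
    add_le_moveAt (add_le_add_right (single_le_iff.mpr (by simpa using hm)) r)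
  by_cases hukj : u k j ≠ 0
  · refine ⟨_, _, .refl _, linked_moveAt hwk, hv, hw', lt_degN_inf h.pos
      (add_single_one_le (x := single j g) r ?_) ((add_single_one_le r hukj).trans hrw')⟩
    have := (h.crit j).pos
    simp only [single_eq_same]
    omega
  by_cases hcommon : ∃ l, u j l ≠ 0 ∧ u k l ≠ 0
  · obtain ⟨l, hjl, hkl⟩ := hcommon
    exact ⟨_, _, linked_moveAt hvj, linked_moveAt hwk, hv', hw', lt_degN_inf h.pos
      ((add_single_one_le r hjl).trans hrv') ((add_single_one_le r hkl).trans hrw')⟩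
  -- otherwise `u_j` and `u_k` would be nonzero with disjoint supports inside the fourth coordinate
  exfalso
  have hij := hv.ne_of_apply_ne_zero hi ((h.crit j).pos.trans_le hvj).ne'
  have hik := hw.ne_of_apply_ne_zero hi ((h.crit k).pos.trans_le hwk).ne'
  have hcard := card_support_add_card_support_add_card_le (x := u j) (y := u k) (A := {i, j, k})
    (fun l => by by_contra! hl; exact hcommon ⟨l, hl⟩)
    (by simp [hv'.apply_eq_zero_of_le (le_moveAt _ _) hi, h.apply_self, hujk])
    (by simp [hw'.apply_eq_zero_of_le (le_moveAt _ _) hi, h.apply_self, not_not.mp hukj])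
  rw [Finset.card_eq_three.mpr ⟨i, j, k, hij, hik, hjk, rfl⟩] at hcard
  have := one_le_card_support (h.ne_zero j)
  have := one_le_card_support (h.ne_zero k)
  omega

lemma exists_closer_of_disjoint (h : CriticalBinomials a c u) {i j : Fin 4} {D g : ℕ}
    {r q : Fin 4 →₀ ℕ} (hi : c i * a i = D) (hv : IsFree a c D (r + single j g))
    (hw : IsFree a c D (r + q)) (hg : c j ≤ g) (hqj : q j = 0) (hdisj : ∀ k, q k = 0 ∨ u j k = 0) :
    ∃ v' w', Linked c u (r + single j g) v' ∧ Linked c u (r + q) w' ∧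
      IsFree a c D v' ∧ IsFree a c D w' ∧ degN a r < degN a (v' ⊓ w') := by
  have hvj : c j ≤ (r + single j g) j := by simp only [Finsupp.add_apply, single_eq_same]; omega
  have hqdeg : degN a q = g * a j := by
    have := hv.1.trans hw.1.symm
    rw [degN_add, degN_add, degN_single] at this
    omega
  have hq0 : q ≠ 0 := fun hq => by
    rw [hq, degN_zero] at hqdeg
    exact (Nat.mul_pos ((h.crit j).pos.trans_le hg) (h.pos j)).ne hqdeg
  -- `q` and `u_j` have disjoint supports avoiding `x_i, x_j`, so `q` is a pure power
  have hij := hv.ne_of_apply_ne_zero hi ((h.crit j).pos.trans_le hvj).ne'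
  have hcard := card_support_add_card_support_add_card_le (A := {i, j}) hdisj
    (by simp [hw.apply_eq_zero_of_le le_add_self hi, hqj])
    (by simp [(hv.moveAt h hvj).apply_eq_zero_of_le (le_moveAt _ _) hi, h.apply_self])
  rw [Finset.card_pair hij] at hcard
  have := one_le_card_support hq0
  have := one_le_card_support (h.ne_zero j)
  obtain ⟨k, m, hm0, rfl⟩ := card_support_eq_one'.mp (by omega : q.support.card = 1)
  have hjk : j ≠ k := by
    rintro rfl
    exact hm0 (by simpa using hqj)
  have hm : c k ≤ m := by
    refine (h.crit k).le (Nat.pos_of_ne_zero hm0) (x := single j g) (single_eq_of_ne hjk.symm) ?_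
    rw [degN_single, ← hqdeg, degN_single]
  exact exists_closer_of_single h hi hv hw hg hm hjk
    ((hdisj k).resolve_left (by simpa using hm0))

lemma exists_closer (h : CriticalBinomials a c u) {i j : Fin 4} {D g : ℕ} {v w : Fin 4 →₀ ℕ}
    (hi : c i * a i = D) (hv : IsFree a c D v) (hw : IsFree a c D w) (hg : c j ≤ g)
    (hvw : v - w = single j g) :
    ∃ v' w', Linked c u v v' ∧ Linked c u w w' ∧ IsFree a c D v' ∧ IsFree a c D w' ∧
      degN a (v ⊓ w) < degN a (v' ⊓ w') := by
  set r := v ⊓ w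
  set q := w - v
  have hv_eq : v = r + single j g := by rw [← hvw, inf_add_tsub]
  have hw_eq : w = r + q := by rw [show r = w ⊓ v from inf_comm v w, inf_add_tsub]
  have hqj : q j = 0 := by
    have := DFunLike.congr_fun hvw j
    have := (h.crit j).pos
    simp only [q, tsub_apply, single_eq_same] at *
    omega
  clear_value r q
  subst hv_eq hw_eq
  by_cases hoverlap : ∃ k, q k ≠ 0 ∧ u j k ≠ 0
  · obtain ⟨k, hqk, hjk⟩ := hoverlap
    have hvj : c j ≤ (r + single j g) j := by simp only [Finsupp.add_apply, single_eq_same]; omega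
    have hrv' : r + u j ≤ moveAt c u (r + single j g) j :=
      add_le_moveAt (add_le_add_right (single_le_iff.mpr (by simpa using hg)) r)
    exact ⟨_, _, linked_moveAt hvj, .refl _, hv.moveAt h hvj, hw, lt_degN_inf h.pos
      ((add_single_one_le r hjk).trans hrv') (add_single_one_le r hqk)⟩
  push Not at hoverlap
  exact exists_closer_of_disjoint h hi hv hw hg hqj fun k => or_iff_not_imp_left.mpr (hoverlap k)

theorem linked_of_isFree (h : CriticalBinomials a c u) {i : Fin 4} {D : ℕ} (hi : c i * a i = D)
    {v w : Fin 4 →₀ ℕ} (hv : IsFree a c D v) (hw : IsFree a c D w) : Linked c u v w := by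
  induction hN : D - degN a (v ⊓ w) using Nat.strong_induction_on generalizing v w with
  | _ N ih =>
  by_cases hvw : v = w
  · rw [hvw]
    exact .refl _
  obtain ⟨j, g, hg, hs | hs⟩ :=
    exists_single_of_degN_eq h.pos h.crit (hv.2 i hi) (hw.2 i hi) (hv.1.trans hw.1.symm) hvw
  · obtain ⟨v', w', hvv', hww', hv', hw', hlt⟩ := exists_closer h hi hv hw hg hs
    have hle : degN a (v' ⊓ w') ≤ D := hv'.1 ▸ degN_mono inf_le_left
    exact hvv'.trans ((ih _ (by omega) hv' hw' rfl).trans hww'.symm)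
  · obtain ⟨w', v', hww', hvv', hw', hv', hlt⟩ := exists_closer h hi hw hv hg hs
    rw [inf_comm, inf_comm w'] at hlt
    have hle : degN a (v' ⊓ w') ≤ D := hv'.1 ▸ degN_mono inf_le_left
    exact hvv'.trans ((ih _ (by omega) hv' hw' rfl).trans hww'.symm)

lemma fin_four_eq_of_pairwise_ne {w x y z : Fin 4} (hwx : w ≠ x) (hwy : w ≠ y) (hwz : w ≠ z)
    (hxy : x ≠ y) (hxz : x ≠ z) (hyz : y ≠ z) (t : Fin 4) : t = w ∨ t = x ∨ t = y ∨ t = z := by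
  revert w x y z t
  decide

/-- A free monomial of degree `D` would be a pure power of the fourth variable `x_z`; moving it
at `x_z` produces a free monomial divisible by some other variable. -/
lemma not_isFree_of_three (h : CriticalBinomials a c u) {D : ℕ} {l₁ l₂ l₃ : Fin 4}
    (h₁₂ : l₁ ≠ l₂) (h₁₃ : l₁ ≠ l₃) (h₂₃ : l₂ ≠ l₃) (hl₁ : c l₁ * a l₁ = D)
    (hl₂ : c l₂ * a l₂ = D) (hl₃ : c l₃ * a l₃ = D) (v : Fin 4 →₀ ℕ) : ¬IsFree a c D v := by
  intro hv
  obtain ⟨z, hz⟩ : ∃ z, v z ≠ 0 := by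
    by_contra! h0
    have := hv.1
    rw [show v = 0 from Finsupp.ext h0, degN_zero] at this
    exact (Nat.mul_pos (h.crit l₁).pos (h.pos l₁)).ne' (hl₁.trans this.symm)
  have hz₁ : z ≠ l₁ := by rintro rfl; exact hz (hv.2 _ hl₁)
  have hz₂ : z ≠ l₂ := by rintro rfl; exact hz (hv.2 _ hl₂)
  have hz₃ : z ≠ l₃ := by rintro rfl; exact hz (hv.2 _ hl₃)
  have hcover := fin_four_eq_of_pairwise_ne hz₁ hz₂ hz₃ h₁₂ h₁₃ h₂₃
  have hv_eq : v = single z (v z) := by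
    ext y
    rcases hcover y with rfl | rfl | rfl | rfl
    · simp
    · simp [hv.2 _ hl₁, hz₁]
    · simp [hv.2 _ hl₂, hz₂]
    · simp [hv.2 _ hl₃, hz₃]
  have hcz : c z ≤ v z := by
    refine (h.crit z).le (Nat.pos_of_ne_zero hz) (x := single l₁ (c l₁))
      (single_eq_of_ne hz₁) ?_
    rw [degN_single, hl₁, ← hv.1, hv_eq, degN_single, single_eq_same]
  have hv' := hv.moveAt h hcz
  obtain ⟨y, hy⟩ : ∃ y, u z y ≠ 0 := by
    by_contra! h0
    exact h.ne_zero z (Finsupp.ext h0)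
  rcases hcover y with rfl | rfl | rfl | rfl
  · exact hy (h.apply_self y)
  · exact hy (hv'.apply_eq_zero_of_le (le_moveAt _ _) hl₁)
  · exact hy (hv'.apply_eq_zero_of_le (le_moveAt _ _) hl₂)
  · exact hy (hv'.apply_eq_zero_of_le (le_moveAt _ _) hl₃)

lemma exists_isFree_linked_single (h : CriticalBinomials a c u)
    (hcycle : ∀ p q, p ≠ q → u p = single q (c q) → u q ≠ single p (c p)) {D : ℕ}
    (hfree : ∃ w, IsFree a c D w) {l : Fin 4} (hl : c l * a l = D) :
    ∃ w, IsFree a c D w ∧ Linked c u (single l (c l)) w := by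
  rcases u_eq_single_or_isFree h l with ⟨l₁, hl₁l, hl₁, hul⟩ | hul
  · rcases u_eq_single_or_isFree h l₁ with ⟨l₂, hl₂l₁, hl₂, hul₁⟩ | hul₁
    · have hl₂l : l₂ ≠ l := by
        rintro rfl
        exact hcycle l₂ l₁ hl₁l.symm hul hul₁
      obtain ⟨w, hw⟩ := hfree
      exact (not_isFree_of_three h hl₁l.symm hl₂l.symm hl₂l₁.symm hl (hl₁.trans hl)
        (hl₂.trans (hl₁.trans hl)) w hw).elim
    · rw [hl₁, hl] at hul₁
      exact ⟨u l₁, hul₁, (linked_single_of_u_eq hul).trans (linked_single_u l₁)⟩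
  · rw [hl] at hul
    exact ⟨u l, hul, linked_single_u l⟩

/-- With no free monomials each `u_m` is a pure power `x_{m'}^{c_{m'}}`; without 2-cycles the
indices `i → i₁ → i₂` are distinct, and a fourth index `l` points to one of them. -/
lemma linked_single_of_forall_not_isFree (h : CriticalBinomials a c u)
    (hcycle : ∀ p q, p ≠ q → u p = single q (c q) → u q ≠ single p (c p)) {D : ℕ}
    (hnone : ∀ w, ¬IsFree a c D w) {i l : Fin 4} (hi : c i * a i = D) (hl : c l * a l = D) :
    Linked c u (single i (c i)) (single l (c l)) := by
  have hpure : ∀ m, c m * a m = D → ∃ m', m' ≠ m ∧ c m' * a m' = D ∧ u m = single m' (c m') := by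
    intro m hm
    rcases u_eq_single_or_isFree h m with ⟨m', hm'm, hm', hum⟩ | hfree
    · exact ⟨m', hm'm, hm'.trans hm, hum⟩
    · exact (hnone _ (hm ▸ hfree)).elim
  obtain ⟨i₁, hi₁i, hi₁, hui⟩ := hpure i hi
  obtain ⟨i₂, hi₂i₁, -, hui₁⟩ := hpure i₁ hi₁
  have hi₂i : i₂ ≠ i := by
    rintro rfl
    exact hcycle _ _ hi₁i.symm hui hui₁
  have hlinked : ∀ m, m = i ∨ m = i₁ ∨ m = i₂ → Linked c u (single i (c i)) (single m (c m)) := by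
    rintro m (rfl | rfl | rfl)
    · exact .refl _
    · exact linked_single_of_u_eq hui
    · exact (linked_single_of_u_eq hui).trans (linked_single_of_u_eq hui₁)
  by_cases hl3 : l = i ∨ l = i₁ ∨ l = i₂
  · exact hlinked l hl3
  push Not at hl3
  obtain ⟨l', hl'l, -, hul⟩ := hpure l hl
  rcases fin_four_eq_of_pairwise_ne hl3.1 hl3.2.1 hl3.2.2 hi₁i.symm hi₂i.symm
    hi₂i₁.symm l' with hl' | hl'
  · exact absurd hl' hl'l
  · exact (hlinked l' hl').trans (linked_single_of_u_eq hul).symm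

theorem linked_single_of_degN_eq (h : CriticalBinomials a c u)
    (hcycle : ∀ p q, p ≠ q → u p = single q (c q) → u q ≠ single p (c p)) {i : Fin 4}
    {v : Fin 4 →₀ ℕ} (hv : degN a v = c i * a i) : Linked c u (single i (c i)) v := by
  by_cases hfree : ∃ w, IsFree a c (c i * a i) w
  · have hlink : ∀ x, degN a x = c i * a i → ∃ w, IsFree a c (c i * a i) w ∧ Linked c u x w := by
      intro x hx
      rcases eq_single_or_isFree h hx with ⟨l, hl, rfl⟩ | hxfree
      · exact exists_isFree_linked_single h hcycle hfree hl
      · exact ⟨x, hxfree, .refl x⟩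
    obtain ⟨w₁, hw₁, h₁⟩ := hlink _ (degN_single i (c i))
    obtain ⟨w₂, hw₂, h₂⟩ := hlink v hv
    exact h₁.trans ((linked_of_isFree h rfl hw₁ hw₂).trans h₂.symm)
  · push Not at hfree
    rcases eq_single_or_isFree h hv with ⟨l, hl, rfl⟩ | hvfree
    · exact linked_single_of_forall_not_isFree h hcycle hfree rfl hl
    · exact absurd hvfree (hfree v)

end FourVariables

theorem statement17 (a c : Fin 4 → ℕ) (ha : ∀ i, 0 < a i)
    (hc : ∀ i, IsCritExp a i (c i))
    (u : Fin 4 → (Fin 4 →₀ ℕ)) (hu : ∀ i, u i i = 0)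
    (f : Fin 4 → MvPolynomial (Fin 4) K)
    (hf : ∀ i, f i = monomial (Finsupp.single i (c i)) (1 : K) - monomial (u i) (1 : K))
    (hmem : ∀ i, f i ∈ curveIdeal K a)
    (hne : ∀ i j, i ≠ j → f i ≠ -f j) :
    criticalIdeal K a c = Ideal.span (Set.range f) := by
  have hdeg : ∀ i, degN a (u i) = c i * a i := fun i => by
    have := degN_eq_of_mem_curveIdeal K (hf i ▸ hmem i)
    rwa [degN_single, eq_comm] at this
  have h : CriticalBinomials a c u := ⟨ha, hc, hu, hdeg⟩
  have hcycle : ∀ p q, p ≠ q → u p = single q (c q) → u q ≠ single p (c p) :=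
    fun p q hpq hp hq => hne p q hpq (by rw [hf, hf, hp, hq, neg_sub])
  refine le_antisymm (Ideal.span_le.mpr ?_) (Ideal.span_le.mpr ?_)
  · rintro _ ⟨i, v, -, rfl, hv⟩
    have hvdeg := degN_eq_of_mem_curveIdeal K hv
    rw [degN_single] at hvdeg
    exact sub_mem_span_of_linked K hf (linked_single_of_degN_eq h hcycle hvdeg.symm)
  · rintro _ ⟨i, rfl⟩
    exact Ideal.subset_span ⟨i, u i, hu i, hf i, hmem i⟩
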